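/- arXiv:2203.13336 — 2 statements merged into one kernel-verified Lean document; each statement's English description precedes it below -/
import Mathlib

section
/- There exists an absolute constant C > 0 such that for all μ > 0 and all ξ, ρ ∈ ℝ, one has |ξ|·| √(T_μ(ξ)) − √(T_μ(ρ)) | ≤ C·(1 + |ξ − ρ|). -/
open Real

lemma tanh_exp (t : ℝ) : Real.tanh t = (Real.exp (2*t) - 1)/(Real.exp (2*t) + 1) := by
  have h1 : Real.exp t ≠ 0 := (Real.exp_pos t).ne'
  rw [Real.tanh_eq_sinh_div_cosh, Real.sinh_eq, Real.cosh_eq,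
    show (2:ℝ)*t = t + t by ring, Real.exp_add, Real.exp_neg]
  rw [div_eq_div_iff (by positivity) (by positivity)]
  field_simp

lemma keyA {x : ℝ} (hx : 0 ≤ x) : 2 * (Real.exp x - 1) ≤ x * (Real.exp x + 1) := by
  set f : ℝ → ℝ := fun y => y * (Real.exp y + 1) - 2 * (Real.exp y - 1) with hf
  have hd : ∀ y : ℝ, HasDerivAt f (y * Real.exp y - Real.exp y + 1) y := by
    intro y
    have h1 : HasDerivAt (fun y : ℝ => Real.exp y) (Real.exp y) y := Real.hasDerivAt_exp y
    have h3 : HasDerivAt (fun y : ℝ => y * (Real.exp y + 1))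
        (1 * (Real.exp y + 1) + y * Real.exp y) y := (hasDerivAt_id y).mul (h1.add_const 1)
    have h4 : HasDerivAt (fun y : ℝ => 2 * (Real.exp y - 1)) (2 * Real.exp y) y :=
      (h1.sub_const 1).const_mul 2
    have h5 := h3.sub h4
    refine h5.congr_deriv ?_
    ring
  have hmono : Monotone f := by
    apply monotone_of_deriv_nonneg
    · exact fun y => (hd y).differentiableAt
    · intro y
      rw [(hd y).deriv]
      have h6 : (1 : ℝ) + -y ≤ Real.exp (-y) := by linarith [Real.add_one_le_exp (-y)]
      have h7 : Real.exp y * (1 + -y) ≤ Real.exp y * Real.exp (-y) :=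
        mul_le_mul_of_nonneg_left h6 (Real.exp_pos y).le
      rw [← Real.exp_add] at h7
      simp at h7
      nlinarith [Real.exp_pos y]
  have h8 := hmono hx
  simp only [hf] at h8
  simp at h8
  linarith

lemma tanh_le_self {t : ℝ} (ht : 0 ≤ t) : Real.tanh t ≤ t := by
  rw [tanh_exp]
  have h3 : Real.exp (2*t) + 1 > 0 := by positivity
  rw [div_le_iff₀ h3]
  have h := keyA (by linarith : (0:ℝ) ≤ 2*t)
  linarith

lemma tanh_nonneg' {t : ℝ} (ht : 0 ≤ t) : 0 ≤ Real.tanh t := by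
  rw [tanh_exp]
  have h1 : (1:ℝ) ≤ Real.exp (2*t) := Real.one_le_exp (by linarith)
  have h3 : Real.exp (2*t) + 1 > 0 := by positivity
  apply div_nonneg <;> linarith

lemma tanh_le_one' (t : ℝ) : Real.tanh t ≤ 1 := by
  rw [tanh_exp]
  have h3 : Real.exp (2*t) + 1 > 0 := by positivity
  rw [div_le_one h3]; linarith

lemma tanh_mono {s t : ℝ} (hts : t ≤ s) : Real.tanh t ≤ Real.tanh s := by
  rw [tanh_exp, tanh_exp]
  have hE : Real.exp (2*t) ≤ Real.exp (2*s) := Real.exp_le_exp.2 (by linarith)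
  have h1 : (0:ℝ) < Real.exp (2*t) + 1 := by positivity
  have h2 : (0:ℝ) < Real.exp (2*s) + 1 := by positivity
  rw [div_le_div_iff₀ h1 h2]
  nlinarith

lemma exp_cubic {x : ℝ} (hx : 0 ≤ x) : 1 + x + x^2/2 + x^3/6 ≤ Real.exp x := by
  have h := Real.sum_le_exp_of_nonneg hx 4
  simp [Finset.sum_range_succ, Nat.factorial] at h
  convert h using 1

lemma tanh_ge {t : ℝ} (ht : 0 ≤ t) (ht1 : t ≤ 1) : t - t^2/2 ≤ Real.tanh t := by
  rw [tanh_exp]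
  have h3 : Real.exp (2*t) + 1 > 0 := by positivity
  rw [le_div_iff₀ h3]
  have hE : 1 + 2*t + (2*t)^2/2 + (2*t)^3/6 ≤ Real.exp (2*t) := exp_cubic (by linarith)
  nlinarith [sq_nonneg t, mul_nonneg (mul_nonneg ht ht) ht]

lemma concave_alg {F X d : ℝ} (hF : 1 ≤ F) (hX : 1 ≤ X) (hd : 0 ≤ d)
    (hA : 2*(X - 1) ≤ (2*d) * (X + 1)) :
    (F*X - 1)/(F*X + 1) - (F - 1)/(F + 1) ≤ d * (1 - ((F - 1)/(F + 1))^2) := by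
  have hF1 : (0:ℝ) < F + 1 := by linarith
  have hFX1 : (0:ℝ) < F * X + 1 := by nlinarith
  rw [div_sub_div _ _ (by linarith : F*X+1 ≠ 0) (by linarith : F+1 ≠ 0)]
  rw [div_le_iff₀ (by positivity)]
  have hrhs : d*(1-((F-1)/(F+1))^2) * ((F*X+1)*(F+1)) = d*4*F*(F*X+1)/(F+1) := by
    field_simp
    ring
  rw [hrhs, le_div_iff₀ hF1]
  have h5 : X - 1 ≤ d*(X+1) := by linarith
  have h6 : (0:ℝ) ≤ d*((F-1)*(X-1)) :=
    mul_nonneg hd (mul_nonneg (by linarith) (by linarith))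
  have h7 : 2*(X-1)*(F+1) ≤ 4*d*(F*X+1) := by
    nlinarith [mul_le_mul_of_nonneg_right h5 (by linarith : (0:ℝ) ≤ 2*(F+1))]
  have h8 : F * (2*(X-1)*(F+1)) ≤ F * (4*d*(F*X+1)) :=
    mul_le_mul_of_nonneg_left h7 (by linarith)
  nlinarith [h8]

lemma tanh_concave {s t : ℝ} (ht : 0 ≤ t) (hts : t ≤ s) :
    Real.tanh s - Real.tanh t ≤ (s - t) * (1 - Real.tanh t ^ 2) := by
  have hEe : Real.exp (2*s) = Real.exp (2*t) * Real.exp (2*(s-t)) := by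
    rw [← Real.exp_add]; ring_nf
  have hF : (1:ℝ) ≤ Real.exp (2*t) := Real.one_le_exp (by linarith)
  have hX : (1:ℝ) ≤ Real.exp (2*(s-t)) := Real.one_le_exp (by linarith)
  have hA : 2*(Real.exp (2*(s-t)) - 1) ≤ (2*(s-t)) * (Real.exp (2*(s-t)) + 1) :=
    keyA (by linarith)
  rw [tanh_exp s, tanh_exp t, hEe]
  exact concave_alg hF hX (by linarith) hA

lemma keyK_sq_small {t u : ℝ} (ht : 0 ≤ t) (h1 : t ≤ 1) (hu0 : 0 ≤ u)
    (hut : u ≤ t) (hg : t - t^2/2 ≤ u) (h1u : 0 ≤ 1 - u^2) :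
    (u + t*(1-u^2))^2 ≤ 4*(t*u) := by
  have hu2 : t/2 ≤ u := by nlinarith
  have hd1 : t - u ≤ t*u := by nlinarith [mul_le_mul_of_nonneg_left hu2 ht]
  have q1 : (t-u)^2 ≤ t^2*u^2 := by
    nlinarith [mul_self_le_mul_self (show (0:ℝ) ≤ t - u by linarith) hd1]
  have q2 : t^2*u^4 ≤ t^2*u^2 := by
    nlinarith [mul_nonneg (sq_nonneg (t*u)) h1u]
  nlinarith [q1, q2, mul_nonneg (mul_nonneg ht hu0) (mul_nonneg hu0 hu0)]

lemma keyK_sq_large {t u F : ℝ} (h1 : 1 ≤ t) (hu : u = (F - 1)/(F + 1))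
    (hF1 : 1 ≤ F) (hFt : (80/11:ℝ)*t ≤ F) :
    (u + t*(1-u^2))^2 ≤ 4*(t*u) := by
  have hFp : (0:ℝ) < F + 1 := by linarith
  have hu34 : (3:ℝ)/4 ≤ u := by
    rw [hu, le_div_iff₀ hFp]
    nlinarith
  have hu1 : u ≤ 1 := by
    rw [hu, div_le_one hFp]; linarith
  have h1u : (0:ℝ) ≤ 1 - u^2 := by nlinarith
  have hw : t * (1 - u^2) ≤ 11/20 := by
    have h1u' : 1 - u^2 = 4*F/(F+1)^2 := by
      rw [hu]; field_simp; ring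
    rw [h1u', show t * (4*F/(F+1)^2) = 4*t*F/(F+1)^2 by ring,
      div_le_iff₀ (by positivity)]
    have hq2 := mul_le_mul_of_nonneg_right hFt (show (0:ℝ) ≤ F by linarith)
    nlinarith [hq2, hF1]
  have hw0 : 0 ≤ t * (1 - u^2) := mul_nonneg (by linarith) h1u
  have hs1 : u + t*(1-u^2) ≤ 31/20 := by linarith
  have hs3 : (3:ℝ) ≤ 4*(t*u) := by nlinarith
  nlinarith [hs1, hs3, hw0, hu34]

-- key pointwise inequality
lemma keyK {t : ℝ} (ht : 0 ≤ t) :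
    Real.tanh t + t * (1 - Real.tanh t ^ 2) ≤ 2 * Real.sqrt (t * Real.tanh t) := by
  have hu0 : 0 ≤ Real.tanh t := tanh_nonneg' ht
  have hu1 : Real.tanh t ≤ 1 := tanh_le_one' t
  have hut : Real.tanh t ≤ t := tanh_le_self ht
  have h1u : (0:ℝ) ≤ 1 - Real.tanh t ^ 2 := by nlinarith
  have hL : 0 ≤ Real.tanh t + t*(1 - Real.tanh t ^ 2) := by
    nlinarith [mul_nonneg ht h1u]
  have hsq : (Real.tanh t + t*(1 - Real.tanh t ^ 2))^2 ≤ 4*(t * Real.tanh t) := by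
    rcases le_or_gt t 1 with h1 | h1
    · exact keyK_sq_small ht h1 hu0 hut (tanh_ge ht h1) h1u
    · have he : (2.7182818283 : ℝ) < Real.exp 1 := Real.exp_one_gt_d9
      have he2 : (7.28:ℝ) ≤ Real.exp 2 := by
        have h2 : Real.exp 2 = Real.exp 1 * Real.exp 1 := by rw [← Real.exp_add]; norm_num
        nlinarith
      have h3 : Real.exp (2*t) = Real.exp 2 * Real.exp (2*(t-1)) := by
        rw [← Real.exp_add]; congr 1; ring
      have h2' : 2*(t-1) + 1 ≤ Real.exp (2*(t-1)) := by
        linarith [Real.add_one_le_exp (2*(t-1))]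
      have hF1 : (1:ℝ) ≤ Real.exp (2*t) := Real.one_le_exp (by linarith)
      have hFe : Real.exp 2 * (2*t - 1) ≤ Real.exp (2*t) := by
        rw [h3]
        have := mul_le_mul_of_nonneg_left h2' (Real.exp_pos 2).le
        nlinarith [Real.exp_pos 2]
      have ht1' : (0:ℝ) ≤ 2*t - 1 := by linarith
      have hqq := mul_nonneg (show (0:ℝ) ≤ Real.exp 2 - 7.28 by linarith) ht1'
      have hFt : (80/11:ℝ)*t ≤ Real.exp (2*t) := by nlinarith [hFe, hqq, h1]
      exact keyK_sq_large h1.le (tanh_exp t) hF1 hFt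
  calc Real.tanh t + t*(1 - Real.tanh t ^ 2)
      = Real.sqrt ((Real.tanh t + t*(1 - Real.tanh t ^ 2))^2) := (Real.sqrt_sq hL).symm
    _ ≤ Real.sqrt (4*(t * Real.tanh t)) := Real.sqrt_le_sqrt hsq
    _ = 2 * Real.sqrt (t * Real.tanh t) := by
        rw [show (4:ℝ)*(t * Real.tanh t) = 2^2*(t * Real.tanh t) by ring,
          Real.sqrt_mul (by positivity), Real.sqrt_sq (by norm_num : (0:ℝ) ≤ 2)]

lemma h_lip {s t : ℝ} (ht : 0 ≤ t) (hts : t ≤ s) :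
    Real.sqrt (s * Real.tanh s) ≤ Real.sqrt (t * Real.tanh t) + (s - t) := by
  have hs : 0 ≤ s := le_trans ht hts
  have hd0 : 0 ≤ s - t := by linarith
  set u := Real.tanh t with hu
  set v := Real.tanh s with hv
  set q := Real.sqrt (t * u) with hq
  have hq0 : 0 ≤ q := Real.sqrt_nonneg _
  have hqsq : q^2 = t * u := Real.sq_sqrt (mul_nonneg ht (tanh_nonneg' ht))
  have hK : u + t*(1-u^2) ≤ 2*q := keyK ht
  have hconc : v - u ≤ (s-t)*(1-u^2) := tanh_concave ht hts
  have hu0 : 0 ≤ u := tanh_nonneg' ht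
  have hu1 : u ≤ 1 := tanh_le_one' t
  have hmain : s * v ≤ (q + (s-t))^2 := by
    nlinarith [mul_le_mul_of_nonneg_left hconc ht,
      mul_le_mul_of_nonneg_left hconc hd0,
      mul_le_mul_of_nonneg_left hK hd0,
      mul_nonneg hd0 hd0, sq_nonneg u,
      mul_nonneg (mul_nonneg hd0 hd0) (sq_nonneg u)]
  calc Real.sqrt (s*v) ≤ Real.sqrt ((q + (s-t))^2) := Real.sqrt_le_sqrt hmain
    _ = q + (s-t) := Real.sqrt_sq (by linarith)

lemma h_abs {s t : ℝ} (hs : 0 ≤ s) (ht : 0 ≤ t) :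
    |Real.sqrt (s * Real.tanh s) - Real.sqrt (t * Real.tanh t)| ≤ |s - t| := by
  rcases le_total t s with h | h
  · rw [abs_of_nonneg (by linarith : (0:ℝ) ≤ s - t)]
    have h1 := h_lip ht h
    have h2 : Real.sqrt (t * Real.tanh t) ≤ Real.sqrt (s * Real.tanh s) :=
      Real.sqrt_le_sqrt (mul_le_mul h (tanh_mono h) (tanh_nonneg' ht) hs)
    rw [abs_le]; constructor <;> linarith
  · rw [abs_of_nonpos (by linarith : s - t ≤ 0)]
    have h1 := h_lip hs h
    have h2 : Real.sqrt (s * Real.tanh s) ≤ Real.sqrt (t * Real.tanh t) :=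
      Real.sqrt_le_sqrt (mul_le_mul h (tanh_mono h) (tanh_nonneg' hs) ht)
    rw [abs_le]; constructor <;> linarith

/-- The symbol `T_μ(ξ) = tanh(√μ |ξ|)/(√μ |ξ|)`, with value `1` at `ξ = 0`. -/
noncomputable def Tmu (μ ξ : ℝ) : ℝ :=
  if ξ = 0 then 1 else Real.tanh (Real.sqrt μ * |ξ|) / (Real.sqrt μ * |ξ|)

lemma Tmu_rep {μ : ℝ} (hμ : 0 < μ) (x : ℝ) :
    |x| * Real.sqrt (Tmu μ x) =
      Real.sqrt ((Real.sqrt μ * |x|) * Real.tanh (Real.sqrt μ * |x|)) / Real.sqrt μ := by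
  have hm0 : 0 < Real.sqrt μ := Real.sqrt_pos.2 hμ
  by_cases hx : x = 0
  · simp [hx, Tmu, Real.tanh_zero]
  · have hxa : 0 < |x| := abs_pos.2 hx
    have htn : 0 ≤ Real.tanh (Real.sqrt μ * |x|) := tanh_nonneg' (by positivity)
    rw [Tmu, if_neg hx]
    have e : x^2 * (Real.tanh (Real.sqrt μ * |x|) / (Real.sqrt μ * |x|))
        = (Real.sqrt μ * |x| * Real.tanh (Real.sqrt μ * |x|)) / (Real.sqrt μ)^2 := by
      have hmm : Real.sqrt μ * Real.sqrt μ = μ := Real.mul_self_sqrt hμ.le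
      field_simp
      linear_combination (-(Real.tanh (Real.sqrt μ * |x|))) * sq_abs x
    calc |x| * Real.sqrt (Real.tanh (Real.sqrt μ * |x|) / (Real.sqrt μ * |x|))
        = Real.sqrt (x^2) * Real.sqrt (Real.tanh (Real.sqrt μ * |x|) / (Real.sqrt μ * |x|)) := by
          rw [Real.sqrt_sq_eq_abs]
      _ = Real.sqrt (x^2 * (Real.tanh (Real.sqrt μ * |x|) / (Real.sqrt μ * |x|))) :=
          (Real.sqrt_mul (sq_nonneg x) _).symm
      _ = Real.sqrt ((Real.sqrt μ * |x| * Real.tanh (Real.sqrt μ * |x|)) / (Real.sqrt μ)^2) := by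
          rw [e]
      _ = Real.sqrt (Real.sqrt μ * |x| * Real.tanh (Real.sqrt μ * |x|)) / Real.sqrt μ := by
          rw [Real.sqrt_div (by positivity), Real.sqrt_sq hm0.le]

lemma Tmu_sqrt_le_one {μ : ℝ} (hμ : 0 < μ) (x : ℝ) : Real.sqrt (Tmu μ x) ≤ 1 := by
  have hm0 : 0 < Real.sqrt μ := Real.sqrt_pos.2 hμ
  apply Real.sqrt_le_one.mpr
  by_cases hx : x = 0
  · simp [hx, Tmu]
  · rw [Tmu, if_neg hx]
    have hxa : 0 < |x| := abs_pos.2 hx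
    rw [div_le_one (by positivity)]
    exact tanh_le_self (by positivity)

theorem sqrt_Tmu_difference_bound :
    ∃ C > 0, ∀ μ : ℝ, 0 < μ → ∀ ξ ρ : ℝ,
      |ξ| * |Real.sqrt (Tmu μ ξ) - Real.sqrt (Tmu μ ρ)| ≤ C * (1 + |ξ - ρ|) := by
  refine ⟨2, by norm_num, fun μ hμ ξ ρ => ?_⟩
  have hm0 : 0 < Real.sqrt μ := Real.sqrt_pos.2 hμ
  set m := Real.sqrt μ with hm
  set A : ℝ → ℝ := fun x => Real.sqrt ((m * |x|) * Real.tanh (m * |x|)) with hA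
  have hrep : ∀ x : ℝ, |x| * Real.sqrt (Tmu μ x) = A x / m := fun x => Tmu_rep hμ x
  have hdiff : |A ξ - A ρ| ≤ m * |ξ - ρ| := by
    refine (h_abs (show 0 ≤ m * |ξ| by positivity)
      (show 0 ≤ m * |ρ| by positivity)).trans ?_
    rw [← mul_sub, abs_mul, abs_of_pos hm0]
    exact mul_le_mul_of_nonneg_left (abs_abs_sub_abs_le_abs_sub ξ ρ) hm0.le
  have hTρ0 : 0 ≤ Real.sqrt (Tmu μ ρ) := Real.sqrt_nonneg _
  have hTρ1 : Real.sqrt (Tmu μ ρ) ≤ 1 := Tmu_sqrt_le_one hμ ρ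
  set a := |ξ| with ha
  set b := |ρ| with hb
  have ha0 : 0 ≤ a := abs_nonneg ξ
  have hba : |b - a| ≤ |ξ - ρ| := by
    rw [abs_sub_comm ξ ρ]
    exact abs_abs_sub_abs_le_abs_sub ρ ξ
  have e1 : a * |Real.sqrt (Tmu μ ξ) - Real.sqrt (Tmu μ ρ)|
      = |a * Real.sqrt (Tmu μ ξ) - a * Real.sqrt (Tmu μ ρ)| := by
    rw [show a * Real.sqrt (Tmu μ ξ) - a * Real.sqrt (Tmu μ ρ)
      = a * (Real.sqrt (Tmu μ ξ) - Real.sqrt (Tmu μ ρ)) by ring, abs_mul,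
      abs_of_nonneg ha0]
  have e2 : a * Real.sqrt (Tmu μ ξ) - a * Real.sqrt (Tmu μ ρ)
      = (A ξ / m - A ρ / m) + (b - a) * Real.sqrt (Tmu μ ρ) := by
    rw [ha, hrep ξ]
    rw [hb, ← hrep ρ]
    ring
  have t1 : |A ξ / m - A ρ / m| ≤ |ξ - ρ| := by
    rw [div_sub_div_same, abs_div, abs_of_pos hm0, div_le_iff₀ hm0]
    calc |A ξ - A ρ| ≤ m * |ξ - ρ| := hdiff
      _ = |ξ - ρ| * m := by ring
  have t2 : |(b - a) * Real.sqrt (Tmu μ ρ)| ≤ |ξ - ρ| := by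
    rw [abs_mul, abs_of_nonneg hTρ0]
    calc |b - a| * Real.sqrt (Tmu μ ρ) ≤ |b - a| * 1 :=
          mul_le_mul_of_nonneg_left hTρ1 (abs_nonneg _)
      _ = |b - a| := mul_one _
      _ ≤ |ξ - ρ| := hba
  rw [e1, e2]
  refine (abs_add_le _ _).trans ?_
  linarith [abs_nonneg (ξ - ρ)]
end

section
/- For every h₀ ∈ (0,1) there exist constants c, C > 0 such that for all β ≥ 1/3, all μ with 0 < μ ≤ 1, all s ∈ ℝ and every Schwartz function f : ℝ → ℂ: (1 − h₀/2)·∫ ⟨ξ⟩^{2s}·|f̂(ξ)|² dξ + c·√μ·∫ ⟨ξ⟩^{2s}·|ξ|·|f̂(ξ)|² dξ ≤ ∫ ⟨ξ⟩^{2s}·K_μ(ξ)·|f̂(ξ)|² dξ ≤ C·( β·∫ ⟨ξ⟩^{2s}·|f̂(ξ)|² dξ + β·√μ·∫ ⟨ξ⟩^{2s}·|ξ|·|f̂(ξ)|² dξ ). (By Plancherel's theorem this is the two-sided bound (1−h₀/2)‖f‖²_{H^s} + c√μ‖D^{1/2}f‖²_{H^s} ≤ ‖√K_μ(D) f‖²_{H^s}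 ≤ c_β²‖f‖²_{H^s} + cβ√μ‖D^{1/2}f‖²_{H^s} for β ≥ 1/3.) -/
open scoped FourierTransform
open Real MeasureTheory

/-- The full-dispersion symbol `K_μ(ξ) = T_μ(ξ)·(1 + β μ ξ²)`. -/
noncomputable def Kmu (β μ ξ : ℝ) : ℝ := Tmu μ ξ * (1 + β * μ * ξ ^ 2)

private lemma exp_lb {x : ℝ} (hx : 0 ≤ x) :
    1 + x + x^2/2 + x^3/6 + x^4/24 ≤ Real.exp x := by
  have h := Real.sum_le_exp_of_nonneg hx 5
  refine le_trans (le_of_eq ?_) h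
  norm_num [Finset.sum_range_succ, Nat.factorial]

private lemma tanh_eq_exp (x : ℝ) :
    Real.tanh x = (Real.exp x - Real.exp (-x)) / (Real.exp x + Real.exp (-x)) := by
  rw [Real.tanh_eq_sinh_div_cosh, Real.sinh_eq, Real.cosh_eq]
  have h : Real.exp x + Real.exp (-x) ≠ 0 := by positivity
  field_simp

private lemma exp_mul_exp_neg (x : ℝ) : Real.exp x * Real.exp (-x) = 1 := by
  rw [← Real.exp_add]; simp

private lemma my_tanh_nonneg {x : ℝ} (hx : 0 ≤ x) : 0 ≤ Real.tanh x := by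
  rw [tanh_eq_exp]
  have h1 : Real.exp (-x) ≤ Real.exp x := Real.exp_le_exp.2 (by linarith)
  have h2 : (0:ℝ) < Real.exp x + Real.exp (-x) := by positivity
  exact div_nonneg (by linarith) h2.le

private lemma my_tanh_le_one (x : ℝ) : Real.tanh x ≤ 1 := by
  rw [tanh_eq_exp]
  have h2 : (0:ℝ) < Real.exp x + Real.exp (-x) := by positivity
  rw [div_le_one h2]
  have := Real.exp_pos (-x); linarith

private lemma my_tanh_le_self {x : ℝ} (hx : 0 ≤ x) : Real.tanh x ≤ x := by
  have hu : (0:ℝ) < Real.exp x := Real.exp_pos x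
  have hv : (0:ℝ) < Real.exp (-x) := Real.exp_pos (-x)
  have huv := exp_mul_exp_neg x
  rw [tanh_eq_exp, div_le_iff₀ (by positivity)]
  rcases le_or_gt 1 x with h | h
  · nlinarith
  · have hub : Real.exp x ≤ 1 + x + x^2/2 + 2/9*x^3 := by
      have h3 := Real.exp_bound' hx h.le (n := 3) (by norm_num)
      refine h3.trans (le_of_eq ?_)
      norm_num [Finset.sum_range_succ, Nat.factorial]
      ring
    have h1 : (Real.exp x)^2 * (1 - x) ≤ 1 + x := by
      nlinarith [pow_nonneg hx 3, pow_nonneg hx 4, pow_nonneg hx 5, pow_nonneg hx 6,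
        pow_nonneg hx 7, mul_le_mul hub hub hu.le (by positivity)]
    nlinarith [h1, mul_pos hu hv]

private lemma tanh_key {x : ℝ} (hx : 0 ≤ x) : 3*x ≤ Real.tanh x * (3 + x^2) := by
  have hu : (0:ℝ) < Real.exp x := Real.exp_pos x
  have hv : (0:ℝ) < Real.exp (-x) := Real.exp_pos (-x)
  have huv := exp_mul_exp_neg x
  have hS : 1 + x + x^2/2 + x^3/6 + x^4/24 ≤ Real.exp x := exp_lb hx
  rw [tanh_eq_exp, div_mul_eq_mul_div, le_div_iff₀ (by positivity)]
  have h1 : x^2 + 3*x + 3 ≤ (Real.exp x)^2 * (x^2 - 3*x + 3) := by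
    nlinarith [pow_nonneg hx 5, pow_nonneg hx 6, pow_nonneg hx 7, pow_nonneg hx 8,
      pow_nonneg hx 9, pow_nonneg hx 10,
      mul_le_mul hS hS (by positivity) hu.le]
  nlinarith [h1, mul_pos hu hv]

private lemma tanh_ge_of_four {x : ℝ} (hx : 4 ≤ x) : 99/100 ≤ Real.tanh x := by
  have hu : (0:ℝ) < Real.exp x := Real.exp_pos x
  have hv : (0:ℝ) < Real.exp (-x) := Real.exp_pos (-x)
  have huv := exp_mul_exp_neg x
  have h4 : (34:ℝ) ≤ Real.exp 4 := by
    have := exp_lb (by norm_num : (0:ℝ) ≤ 4)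
    norm_num at this; linarith
  have hu4 : (34:ℝ) ≤ Real.exp x := h4.trans (Real.exp_le_exp.2 hx)
  rw [tanh_eq_exp, le_div_iff₀ (by positivity)]
  nlinarith [huv, hu4, hv]

private lemma symbol_lower {h₀ β μ : ℝ} (hh₀ : 0 < h₀) (hh₀' : h₀ < 1) (hβ : 1/3 ≤ β)
    (hμ : 0 < μ) (ξ : ℝ) :
    1 - h₀/2 + h₀/20 * (Real.sqrt μ * |ξ|) ≤ Kmu β μ ξ := by
  rcases eq_or_ne ξ 0 with rfl | hξ
  · simp [Kmu, Tmu]; linarith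
  · set x := Real.sqrt μ * |ξ| with hxdef
    have hx : 0 < x := mul_pos (Real.sqrt_pos.2 hμ) (abs_pos.2 hξ)
    have hx2 : β * μ * ξ^2 = β * x^2 := by
      rw [hxdef, mul_pow, Real.sq_sqrt hμ.le, sq_abs]; ring
    unfold Kmu Tmu
    rw [if_neg hξ, ← hxdef, hx2]
    have htn : 0 ≤ Real.tanh x := my_tanh_nonneg hx.le
    rcases le_or_gt x 4 with h4 | h4
    · have ht := tanh_key hx.le
      have hK1 : 1 ≤ Real.tanh x / x * (1 + β*x^2) := by
        rw [div_mul_eq_mul_div, le_div_iff₀ hx]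
        nlinarith [mul_nonneg htn (sq_nonneg x)]
      nlinarith [hK1]
    · have ht99 := tanh_ge_of_four h4.le
      have hK2 : 33/100 * x ≤ Real.tanh x / x * (1 + β*x^2) := by
        rw [div_mul_eq_mul_div (Real.tanh x), le_div_iff₀ hx]
        nlinarith [sq_nonneg x, mul_nonneg htn (sq_nonneg x)]
      nlinarith [hK2, mul_le_mul_of_nonneg_right hh₀'.le hx.le]

private lemma symbol_nonneg {β μ : ℝ} (hβ : 1/3 ≤ β) (hμ : 0 < μ) (ξ : ℝ) :
    0 ≤ Kmu β μ ξ := by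
  rcases eq_or_ne ξ 0 with rfl | hξ
  · simp [Kmu, Tmu]
  · have hx : 0 < Real.sqrt μ * |ξ| := mul_pos (Real.sqrt_pos.2 hμ) (abs_pos.2 hξ)
    unfold Kmu Tmu
    rw [if_neg hξ]
    have htn := my_tanh_nonneg hx.le
    have : (0:ℝ) ≤ 1 + β * μ * ξ^2 := by
      nlinarith [mul_nonneg (mul_nonneg (by linarith : (0:ℝ) ≤ β) hμ.le) (sq_nonneg ξ)]
    exact mul_nonneg (div_nonneg htn hx.le) this

private lemma symbol_upper {β μ : ℝ} (hβ : 1/3 ≤ β) (hμ : 0 < μ) (ξ : ℝ) :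
    Kmu β μ ξ ≤ 3*β + β * (Real.sqrt μ * |ξ|) := by
  rcases eq_or_ne ξ 0 with rfl | hξ
  · simp [Kmu, Tmu]; nlinarith
  · set x := Real.sqrt μ * |ξ| with hxdef
    have hx : 0 < x := mul_pos (Real.sqrt_pos.2 hμ) (abs_pos.2 hξ)
    have hx2 : β * μ * ξ^2 = β * x^2 := by
      rw [hxdef, mul_pow, Real.sq_sqrt hμ.le, sq_abs]; ring
    unfold Kmu Tmu
    rw [if_neg hξ, ← hxdef, hx2]
    have h1 : Real.tanh x / x ≤ 1 := (div_le_one hx).2 (my_tanh_le_self hx.le)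
    have hexp : Real.tanh x / x * (1 + β*x^2) = Real.tanh x / x + β*x*Real.tanh x := by
      field_simp
    rw [hexp]
    have h2 : β*x*Real.tanh x ≤ β*x := by
      nlinarith [my_tanh_le_one x, mul_nonneg (by linarith : (0:ℝ) ≤ β) hx.le]
    linarith

private lemma integrable_aux (g : SchwartzMap ℝ ℂ) (s : ℝ) :
    Integrable (fun ξ : ℝ => (1+ξ^2)^s * (1+|ξ|) * ‖g ξ‖^2) := by
  set n : ℕ := ⌈s⌉₊ with hn
  set m : ℕ := 2*n+1 with hm
  set M : ℝ := SchwartzMap.seminorm ℝ 0 0 g with hM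
  have hMg : ∀ ξ : ℝ, ‖g ξ‖ ≤ M := fun ξ => SchwartzMap.norm_le_seminorm ℝ g ξ
  have hM0 : 0 ≤ M := le_trans (norm_nonneg _) (hMg 0)
  have hφ : Integrable (fun ξ : ℝ =>
      M * 2^m * ‖g ξ‖ + M * 2^m * (‖ξ‖^m * ‖g ξ‖)) := by
    exact ((g.integrable.norm).const_mul _).add
      ((g.integrable_pow_mul volume m).const_mul _)
  refine hφ.mono' ?_ (Filter.Eventually.of_forall fun ξ => ?_)
  · refine Continuous.aestronglyMeasurable ?_
    refine (Continuous.mul (Continuous.mul ?_ (continuous_const.add continuous_abs))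
      ((g.continuous.norm).pow 2))
    exact Continuous.rpow_const (continuous_const.add (continuous_pow 2))
      (fun ξ => Or.inl (by positivity))
  · have h1 : (0:ℝ) < 1 + ξ^2 := by positivity
    have habs : 0 ≤ |ξ| := abs_nonneg ξ
    have b1 : (1+ξ^2)^s ≤ (1+ξ^2)^(n:ℝ) :=
      Real.rpow_le_rpow_of_exponent_le (by nlinarith [sq_nonneg ξ]) (Nat.le_ceil s)
    have b1' : (1+ξ^2)^(n:ℝ) = (1+ξ^2)^n := Real.rpow_natCast _ n
    have b2 : (1+ξ^2)^n * (1+|ξ|) ≤ (1+|ξ|)^m := by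
      have h2 : (1+ξ^2) ≤ (1+|ξ|)^2 := by nlinarith [sq_abs ξ]
      calc (1+ξ^2)^n * (1+|ξ|) ≤ ((1+|ξ|)^2)^n * (1+|ξ|) := by
            exact mul_le_mul_of_nonneg_right (pow_le_pow_left₀ h1.le h2 n) (by positivity)
        _ = (1+|ξ|)^m := by rw [← pow_mul, ← pow_succ]
    have b3 : (1+|ξ|)^m ≤ 2^m * (1 + |ξ|^m) := by
      rcases le_or_gt (|ξ|) 1 with h | h
      · have : (1+|ξ|)^m ≤ 2^m := pow_le_pow_left₀ (by positivity) (by linarith) m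
        nlinarith [pow_nonneg habs m, pow_pos (show (0:ℝ) < 2 by norm_num) m]
      · have : (1+|ξ|)^m ≤ (2*|ξ|)^m := pow_le_pow_left₀ (by positivity) (by linarith) m
        rw [mul_pow] at this
        nlinarith [pow_pos (show (0:ℝ) < 2 by norm_num) m]
    have b4 : ‖g ξ‖^2 ≤ M * ‖g ξ‖ := by
      have := hMg ξ
      nlinarith [norm_nonneg (g ξ)]
    have hw : 0 ≤ (1+ξ^2)^s := le_of_lt (Real.rpow_pos_of_pos h1 s)
    have key : (1+ξ^2)^s * (1+|ξ|) * ‖g ξ‖^2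
        ≤ M * 2^m * ‖g ξ‖ + M * 2^m * (‖ξ‖^m * ‖g ξ‖) := by
      have c1 : (1+ξ^2)^s * (1+|ξ|) ≤ 2^m * (1+|ξ|^m) := by
        calc (1+ξ^2)^s * (1+|ξ|) ≤ (1+ξ^2)^n * (1+|ξ|) := by
              refine mul_le_mul_of_nonneg_right ?_ (by positivity)
              rw [← b1']; exact b1
          _ ≤ (1+|ξ|)^m := b2
          _ ≤ 2^m * (1 + |ξ|^m) := b3
      have c2 : (1+ξ^2)^s * (1+|ξ|) * ‖g ξ‖^2 ≤ 2^m * (1+|ξ|^m) * (M * ‖g ξ‖) := by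
        refine mul_le_mul c1 b4 (by positivity) (by positivity)
      refine c2.trans (le_of_eq ?_)
      have : ‖ξ‖ = |ξ| := rfl
      rw [this]; ring
    rw [Real.norm_eq_abs, abs_of_nonneg (by positivity)]
    exact key

private lemma Kmu_measurable (β μ : ℝ) : Measurable (Kmu β μ) := by
  unfold Kmu Tmu
  refine Measurable.mul ?_ (by measurability)
  refine Measurable.ite ?_ measurable_const ?_
  · exact measurableSet_eq_fun measurable_id measurable_const
  · have htanh : Continuous Real.tanh := by
      have : Real.tanh = fun x => Real.sinh x / Real.cosh x := by
        funext x; exact Real.tanh_eq_sinh_div_cosh x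
      rw [this]
      exact Real.continuous_sinh.div Real.continuous_cosh
        (fun x => (Real.cosh_pos x).ne')
    exact ((htanh.comp (continuous_const.mul continuous_abs)).measurable).div
      ((continuous_const.mul continuous_abs).measurable)

theorem coercivity_Kmu_large_beta (h₀ : ℝ) (hh₀ : 0 < h₀) (hh₀' : h₀ < 1) :
    ∃ c > 0, ∃ C > 0, ∀ β : ℝ, 1/3 ≤ β → ∀ μ : ℝ, 0 < μ → μ ≤ 1 → ∀ s : ℝ,
      ∀ f : SchwartzMap ℝ ℂ,
        (1 - h₀/2) * (∫ ξ : ℝ, (1 + ξ ^ 2) ^ s * ‖𝓕 (⇑f) ξ‖ ^ 2)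
            + c * Real.sqrt μ * (∫ ξ : ℝ, (1 + ξ ^ 2) ^ s * |ξ| * ‖𝓕 (⇑f) ξ‖ ^ 2)
          ≤ (∫ ξ : ℝ, (1 + ξ ^ 2) ^ s * Kmu β μ ξ * ‖𝓕 (⇑f) ξ‖ ^ 2) ∧
        (∫ ξ : ℝ, (1 + ξ ^ 2) ^ s * Kmu β μ ξ * ‖𝓕 (⇑f) ξ‖ ^ 2)
          ≤ C * (β * (∫ ξ : ℝ, (1 + ξ ^ 2) ^ s * ‖𝓕 (⇑f) ξ‖ ^ 2)
              + β * Real.sqrt μ * (∫ ξ : ℝ, (1 + ξ ^ 2) ^ s * |ξ| * ‖𝓕 (⇑f) ξ‖ ^ 2)) := by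
  refine ⟨h₀/20, by positivity, 3, by norm_num, ?_⟩
  intro β hβ μ hμ hμ1 s f
  have hcoe : 𝓕 (⇑f) = ⇑(SchwartzMap.fourierTransformCLM ℂ f) :=
    rfl
  rw [hcoe]
  set g : SchwartzMap ℝ ℂ := SchwartzMap.fourierTransformCLM ℂ f with hg
  have hβ0 : (0:ℝ) ≤ β := by linarith
  have hsμ : 0 ≤ Real.sqrt μ := Real.sqrt_nonneg μ
  have hsμ1 : Real.sqrt μ ≤ 1 := by
    rw [show (1:ℝ) = Real.sqrt 1 by simp]
    exact Real.sqrt_le_sqrt hμ1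
  -- weights and integrands
  have hwpos : ∀ ξ : ℝ, (0:ℝ) < (1+ξ^2)^s := fun ξ =>
    Real.rpow_pos_of_pos (by positivity) s
  have haux := integrable_aux g s
  -- integrability of the three integrands
  have hmeasA : AEStronglyMeasurable (fun ξ : ℝ => (1+ξ^2)^s * ‖g ξ‖^2) volume := by
    refine Continuous.aestronglyMeasurable ?_
    exact (Continuous.rpow_const (continuous_const.add (continuous_pow 2))
      (fun ξ => Or.inl (by positivity : (1:ℝ) + ξ^2 ≠ 0))).mul ((g.continuous.norm).pow 2)
  have hmeasB : AEStronglyMeasurable (fun ξ : ℝ => (1+ξ^2)^s * |ξ| * ‖g ξ‖^2) volume := by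
    refine Continuous.aestronglyMeasurable ?_
    exact ((Continuous.rpow_const (continuous_const.add (continuous_pow 2))
      (fun ξ => Or.inl (by positivity : (1:ℝ) + ξ^2 ≠ 0))).mul continuous_abs).mul ((g.continuous.norm).pow 2)
  have hmeasK : AEStronglyMeasurable (fun ξ : ℝ => (1+ξ^2)^s * Kmu β μ ξ * ‖g ξ‖^2) volume := by
    refine Measurable.aestronglyMeasurable ?_
    refine Measurable.mul (Measurable.mul ?_ (Kmu_measurable β μ)) ?_
    · exact (Continuous.rpow_const (continuous_const.add (continuous_pow 2))
        (fun ξ => Or.inl (by positivity : (1:ℝ) + ξ^2 ≠ 0))).measurable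
    · exact ((g.continuous.norm).pow 2).measurable
  have hA : Integrable (fun ξ : ℝ => (1+ξ^2)^s * ‖g ξ‖^2) := by
    refine haux.mono' hmeasA (Filter.Eventually.of_forall fun ξ => ?_)
    have h1 := (hwpos ξ).le
    rw [Real.norm_eq_abs, abs_of_nonneg (by positivity)]
    have : (1:ℝ) ≤ 1 + |ξ| := by linarith [abs_nonneg ξ]
    nlinarith [sq_nonneg ‖g ξ‖, mul_nonneg h1 (sq_nonneg ‖g ξ‖), abs_nonneg ξ]
  have hB : Integrable (fun ξ : ℝ => (1+ξ^2)^s * |ξ| * ‖g ξ‖^2) := by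
    refine haux.mono' hmeasB (Filter.Eventually.of_forall fun ξ => ?_)
    have h1 := (hwpos ξ).le
    rw [Real.norm_eq_abs, abs_of_nonneg (by positivity)]
    nlinarith [sq_nonneg ‖g ξ‖, mul_nonneg h1 (sq_nonneg ‖g ξ‖), abs_nonneg ξ]
  have hK : Integrable (fun ξ : ℝ => (1+ξ^2)^s * Kmu β μ ξ * ‖g ξ‖^2) := by
    refine ((haux.const_mul (3*β)).mono' hmeasK (Filter.Eventually.of_forall fun ξ => ?_))
    have h1 := (hwpos ξ).le
    have hK0 := symbol_nonneg hβ hμ ξ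
    have hKU := symbol_upper hβ hμ ξ
    rw [Real.norm_eq_abs, abs_of_nonneg (mul_nonneg (mul_nonneg h1 hK0) (sq_nonneg _))]
    have hKU2 : Kmu β μ ξ ≤ 3*β * (1+|ξ|) := by
      have : β * (Real.sqrt μ * |ξ|) ≤ β * |ξ| := by
        have := mul_le_mul_of_nonneg_right hsμ1 (abs_nonneg ξ)
        nlinarith
      nlinarith [abs_nonneg ξ]
    calc (1+ξ^2)^s * Kmu β μ ξ * ‖g ξ‖^2
        ≤ (1+ξ^2)^s * (3*β * (1+|ξ|)) * ‖g ξ‖^2 := by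
          exact mul_le_mul_of_nonneg_right
            (mul_le_mul_of_nonneg_left hKU2 h1) (sq_nonneg _)
      _ = 3*β * ((1+ξ^2)^s * (1+|ξ|) * ‖g ξ‖^2) := by ring
  -- lower bound
  constructor
  · rw [← MeasureTheory.integral_const_mul, ← MeasureTheory.integral_const_mul,
      ← integral_add (hA.const_mul _) (hB.const_mul _)]
    refine integral_mono ((hA.const_mul _).add (hB.const_mul _)) hK fun ξ => ?_
    have h := mul_le_mul_of_nonneg_right (symbol_lower hh₀ hh₀' hβ hμ ξ)
      (mul_nonneg (hwpos ξ).le (sq_nonneg ‖g ξ‖))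
    simp only
    linear_combination h
  · have step1 : (∫ ξ : ℝ, (1+ξ^2)^s * Kmu β μ ξ * ‖g ξ‖^2)
        ≤ ∫ ξ : ℝ, (3*β * ((1+ξ^2)^s * ‖g ξ‖^2) + β*Real.sqrt μ * ((1+ξ^2)^s * |ξ| * ‖g ξ‖^2)) := by
      refine integral_mono hK ((hA.const_mul _).add (hB.const_mul _)) fun ξ => ?_
      have h := mul_le_mul_of_nonneg_right (symbol_upper hβ hμ ξ)
        (mul_nonneg (hwpos ξ).le (sq_nonneg ‖g ξ‖))
      simp only
      linear_combination h
    rw [integral_add (hA.const_mul _) (hB.const_mul _), MeasureTheory.integral_const_mul,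
      MeasureTheory.integral_const_mul] at step1
    have hBnn : 0 ≤ ∫ ξ : ℝ, (1+ξ^2)^s * |ξ| * ‖g ξ‖^2 :=
      integral_nonneg fun ξ => by positivity
    have hAnn : 0 ≤ ∫ ξ : ℝ, (1+ξ^2)^s * ‖g ξ‖^2 :=
      integral_nonneg fun ξ => by positivity
    nlinarith [mul_nonneg (mul_nonneg hβ0 hsμ) hBnn]
end
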